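/- The curve x⁴ − x²y² + (2/(3√3))xy³ = 1 is closed and singular at infinity: let h_c = h_{2/(3√3), 0}. Then H_{2/(3√3),0} is a closed subset of ℝ²; the point (1, √3) lies in the closure of the cone ℝ_{>0}·H_{2/(3√3),0}; h_c(1, √3) = 0; and the differential of h_c vanishes at (1, √3), i.e. both first-order partial derivatives of h_c are zero at (1, √3). -/

import Mathlib

/-!
Common definitions: the quartic polynomial `hLK L K (x,y) = x⁴ − x²y² + L·x·y³ + K·y⁴` on ℝ²,
the Hessian determinant of a function on ℝ², and the curve `Hcurve L K = H_{L,K}`,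
the connected component containing (1,0) of the hyperbolic points on the level set {h = 1}.
-/

noncomputable section
open Matrix

/-- `h_{L,K}(x,y) = x⁴ − x²y² + L·x·y³ + K·y⁴`. -/
def hLK (L K : ℝ) (v : Fin 2 → ℝ) : ℝ :=
  v 0 ^ 4 - v 0 ^ 2 * v 1 ^ 2 + L * v 0 * v 1 ^ 3 + K * v 1 ^ 4

/-- Determinant of the Hessian matrix of `f : ℝ² → ℝ` at `p`. -/
def hessDet2 (f : (Fin 2 → ℝ) → ℝ) (p : Fin 2 → ℝ) : ℝ :=
  Matrix.det (Matrix.of fun i j : Fin 2 =>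
    iteratedFDeriv ℝ 2 f p ![Pi.single i 1, Pi.single j 1])

/-- `H_{L,K}`: the connected component containing `(1,0)` of
`{p ∈ ℝ² : h_{L,K}(p) = 1 and p is a hyperbolic point of h_{L,K}}`. -/
def Hcurve (L K : ℝ) : Set (Fin 2 → ℝ) :=
  connectedComponentIn {p | hLK L K p = 1 ∧ hessDet2 (hLK L K) p < 0} ![1, 0]

/-!
Write `c = 2/(3√3)`. The quartic factors as `h_c(x,y) = c·x·(y − √3x)²(y + √3x/2)` and its Hessian
determinant as `−(4/3)(y − √3x)²(y² + 6x²)`. Hence `h_c = 1` forces `y ≠ √3x`, so every point of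
the level set is hyperbolic, and `H` is a connected component of the closed set `{h_c = 1}`, hence
closed. For `0 ≤ t < √3` we have `h_c(1,t) > 0`, so rescaling `(1,t)` onto `{h_c = 1}` gives an arc
through `(1,0)` inside `H` whose directions tend to `(1,√3)`, a double zero of `h_c`.
-/

theorem IsClosed.connectedComponentIn {α : Type*} [TopologicalSpace α] {F : Set α}
    (hF : IsClosed F) (x : α) : IsClosed (connectedComponentIn F x) := by
  by_cases hx : x ∈ F
  · exact isClosed_of_closure_subset <|
      isPreconnected_connectedComponentIn.closure.subset_connectedComponentIn
        (subset_closure (mem_connectedComponentIn hx))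
        (closure_minimal (connectedComponentIn_subset F x) hF)
  · rw [connectedComponentIn_eq_empty hx]
    exact isClosed_empty

open ContinuousLinearMap Filter Topology

local notation "dx" => (proj 0 : (Fin 2 → ℝ) →L[ℝ] ℝ)
local notation "dy" => (proj 1 : (Fin 2 → ℝ) →L[ℝ] ℝ)

lemma hasFDerivAt_monomial (a : ℝ) (m n : ℕ) (p : Fin 2 → ℝ) :
    HasFDerivAt (fun v : Fin 2 → ℝ => a * v 0 ^ m * v 1 ^ n)
      ((a * m * p 0 ^ (m - 1) * p 1 ^ n) • dx + (a * n * p 0 ^ m * p 1 ^ (n - 1)) • dy) p := by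
  refine ((((dx).hasFDerivAt.pow m).const_mul a).mul ((dy).hasFDerivAt.pow n)).congr_fderiv ?_
  ext v
  simp only [_root_.add_apply, _root_.smul_apply, smul_eq_mul, nsmul_eq_mul, proj_apply]
  ring

def gradHLK (L K : ℝ) (p : Fin 2 → ℝ) : (Fin 2 → ℝ) →L[ℝ] ℝ :=
  (4 * p 0 ^ 3 - 2 * p 0 * p 1 ^ 2 + L * p 1 ^ 3) • dx
    + (-2 * p 0 ^ 2 * p 1 + 3 * L * p 0 * p 1 ^ 2 + 4 * K * p 1 ^ 3) • dy

def hessHLK (L K : ℝ) (p : Fin 2 → ℝ) : (Fin 2 → ℝ) →L[ℝ] (Fin 2 → ℝ) →L[ℝ] ℝ :=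
  ((12 * p 0 ^ 2 - 2 * p 1 ^ 2) • dx + (-4 * p 0 * p 1 + 3 * L * p 1 ^ 2) • dy).smulRight dx
    + ((-4 * p 0 * p 1 + 3 * L * p 1 ^ 2) • dx
      + (-2 * p 0 ^ 2 + 6 * L * p 0 * p 1 + 12 * K * p 1 ^ 2) • dy).smulRight dy

lemma hasFDerivAt_hLK (L K : ℝ) (p : Fin 2 → ℝ) : HasFDerivAt (hLK L K) (gradHLK L K p) p := by
  have h := (((hasFDerivAt_monomial 1 4 0 p).sub (hasFDerivAt_monomial 1 2 2 p)).add
    (hasFDerivAt_monomial L 1 3 p)).add (hasFDerivAt_monomial K 0 4 p)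
  refine (h.congr_fderiv ?_).congr_of_eventuallyEq (.of_forall fun v => ?_)
  · ext i
    simp only [gradHLK, _root_.add_apply, _root_.sub_apply, _root_.smul_apply, proj_apply,
      smul_eq_mul]
    ring
  · simp only [hLK, Pi.add_apply, Pi.sub_apply]; ring

lemma hasFDerivAt_gradHLK (L K : ℝ) (p : Fin 2 → ℝ) :
    HasFDerivAt (gradHLK L K) (hessHLK L K p) p := by
  have hx := ((hasFDerivAt_monomial 4 3 0 p).sub (hasFDerivAt_monomial 2 1 2 p)).add
    (hasFDerivAt_monomial L 0 3 p)
  have hy := ((hasFDerivAt_monomial (-2) 2 1 p).add (hasFDerivAt_monomial (3 * L) 1 2 p)).add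
    (hasFDerivAt_monomial (4 * K) 0 3 p)
  refine (((hx.smul_const dx).add (hy.smul_const dy)).congr_fderiv ?_).congr_of_eventuallyEq
    (.of_forall fun v => ?_)
  · ext i j
    simp only [hessHLK, _root_.add_apply, _root_.sub_apply, _root_.smul_apply, smulRight_apply,
      proj_apply, smul_eq_mul]
    ring
  · ext i
    simp only [gradHLK, _root_.add_apply, _root_.smul_apply, proj_apply, smul_eq_mul,
      Pi.add_apply, Pi.sub_apply]
    ring

lemma fderiv_hLK (L K : ℝ) : fderiv ℝ (hLK L K) = gradHLK L K :=
  funext fun p => (hasFDerivAt_hLK L K p).fderiv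

lemma hessDet2_hLK (L K : ℝ) (p : Fin 2 → ℝ) :
    hessDet2 (hLK L K) p = (12 * p 0 ^ 2 - 2 * p 1 ^ 2) * (-2 * p 0 ^ 2 + 6 * L * p 0 * p 1
      + 12 * K * p 1 ^ 2) - (-4 * p 0 * p 1 + 3 * L * p 1 ^ 2) ^ 2 := by
  have hess : ∀ u v, iteratedFDeriv ℝ 2 (hLK L K) p ![u, v] = hessHLK L K p u v := by
    intro u v
    rw [iteratedFDeriv_two_apply, fderiv_hLK, (hasFDerivAt_gradHLK L K p).fderiv]
    rfl
  simp only [hessDet2, det_fin_two, of_apply, hess, hessHLK, _root_.add_apply, _root_.smul_apply,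
    smulRight_apply, proj_apply, smul_eq_mul, Pi.single_eq_same, ne_eq, one_ne_zero, zero_ne_one,
    not_false_eq_true, Pi.single_eq_of_ne]
  ring

lemma continuous_hLK (L K : ℝ) : Continuous (hLK L K) := by
  unfold hLK
  fun_prop

lemma hLK_smul (L K l : ℝ) (v : Fin 2 → ℝ) : hLK L K (l • v) = l ^ 4 * hLK L K v := by
  simp only [hLK, Pi.smul_apply, smul_eq_mul]
  ring

lemma hLK_rpow_smul_self {L K : ℝ} {v : Fin 2 → ℝ} (hv : 0 < hLK L K v) :
    hLK L K (hLK L K v ^ (-(1 / 4) : ℝ) • v) = 1 := by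
  rw [hLK_smul, ← Real.rpow_natCast, ← Real.rpow_mul hv.le]
  norm_num [Real.rpow_neg_one, hv.ne']

lemma exists_smul_mem_connectedComponentIn_level {L K : ℝ} {T : Set ℝ} (hT : IsPreconnected T)
    (h0 : 0 ∈ T) (hpos : ∀ t ∈ T, 0 < hLK L K ![1, t]) {t : ℝ} (ht : t ∈ T) :
    ∃ l : ℝ, 0 < l ∧ ∃ q ∈ connectedComponentIn {p | hLK L K p = 1} ![1, 0], ![1, t] = l • q := by
  set γ : ℝ → Fin 2 → ℝ := fun t => hLK L K ![1, t] ^ (-(1 / 4) : ℝ) • ![1, t]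
  have hline : Continuous fun t : ℝ => (![1, t] : Fin 2 → ℝ) := by fun_prop
  have hγ : ContinuousOn γ T :=
    (((continuous_hLK L K).comp hline).continuousOn.rpow_const
      fun t ht => .inl (hpos t ht).ne').smul hline.continuousOn
  have hγ0 : γ 0 = ![1, 0] := by simp [γ, hLK]
  have harc : γ '' T ⊆ connectedComponentIn {p | hLK L K p = 1} ![1, 0] :=
    (hT.image γ hγ).subset_connectedComponentIn ⟨0, h0, hγ0⟩
      (Set.image_subset_iff.2 fun t ht => hLK_rpow_smul_self (hpos t ht))
  refine ⟨hLK L K ![1, t] ^ (1 / 4 : ℝ), Real.rpow_pos_of_pos (hpos t ht) _, γ t,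
    harc ⟨t, ht, rfl⟩, ?_⟩
  rw [smul_smul, ← Real.rpow_add (hpos t ht)]
  norm_num

lemma two_div_three_mul_sqrt_three : 2 / (3 * √3) = 2 * √3 / 9 := by
  have hs : √3 ^ 2 = 3 := Real.sq_sqrt (by norm_num)
  field_simp
  linear_combination -3 * hs

lemma hLK_c_factorization (p : Fin 2 → ℝ) :
    hLK (2 / (3 * √3)) 0 p = 2 / (3 * √3) * p 0 * (p 1 - √3 * p 0) ^ 2 * (p 1 + √3 / 2 * p 0) := by
  have hs : √3 ^ 2 = 3 := Real.sq_sqrt (by norm_num)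
  have hcs : 2 / (3 * √3) * √3 = 2 / 3 := by field_simp
  simp only [hLK]
  linear_combination (3 / 2 * p 0 ^ 2 * p 1 ^ 2 - 1 / 2 * √3 ^ 2 * p 0 ^ 4) * hcs
    - 1 / 3 * p 0 ^ 4 * hs

lemma hessDet2_hLK_c (p : Fin 2 → ℝ) :
    hessDet2 (hLK (2 / (3 * √3)) 0) p =
      -(4 / 3) * (p 1 - √3 * p 0) ^ 2 * (p 1 ^ 2 + 6 * p 0 ^ 2) := by
  have hs : √3 ^ 2 = 3 := Real.sq_sqrt (by norm_num)
  rw [hessDet2_hLK, two_div_three_mul_sqrt_three]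
  linear_combination (8 * p 0 ^ 4 + 4 / 3 * p 0 ^ 2 * p 1 ^ 2 - 4 / 9 * p 1 ^ 4) * hs

lemma hessDet2_hLK_c_neg {p : Fin 2 → ℝ} (hp : hLK (2 / (3 * √3)) 0 p = 1) :
    hessDet2 (hLK (2 / (3 * √3)) 0) p < 0 := by
  have hs : √3 ^ 2 = 3 := Real.sq_sqrt (by norm_num)
  have hne : p 1 - √3 * p 0 ≠ 0 := by
    intro h
    rw [hLK_c_factorization, h] at hp
    norm_num at hp
  have hsq := sq_pos_of_ne_zero hne
  have hq : 0 < p 1 ^ 2 + 6 * p 0 ^ 2 := by nlinarith [sq_nonneg (p 1 + √3 * p 0), sq_nonneg (p 0)]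
  rw [hessDet2_hLK_c]
  nlinarith [mul_pos hsq hq]

lemma Hcurve_c_eq :
    Hcurve (2 / (3 * √3)) 0 = connectedComponentIn {p | hLK (2 / (3 * √3)) 0 p = 1} ![1, 0] := by
  simp only [Hcurve, and_iff_left_of_imp hessDet2_hLK_c_neg]

lemma gradHLK_c_one_sqrt_three_eq_zero : gradHLK (2 / (3 * √3)) 0 ![1, √3] = 0 := by
  have hs : √3 ^ 2 = 3 := Real.sq_sqrt (by norm_num)
  ext v
  simp only [gradHLK, two_div_three_mul_sqrt_three, _root_.add_apply, _root_.smul_apply, proj_apply,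
    smul_eq_mul, _root_.zero_apply, cons_val_zero, cons_val_one]
  linear_combination (2 / 9 * (√3 ^ 2 - 6) * v 0 + 2 / 3 * √3 * v 1) * hs

/-- **The curve `x⁴ − x²y² + (2/(3√3))xy³ = 1` is closed and singular at infinity.**
`H_{2/(3√3),0}` is closed; the point `(1, √3)` lies in the closure of the cone
`ℝ_{>0}·H_{2/(3√3),0}`, is a zero of `h_c = h_{2/(3√3),0}`, and the differential of
`h_c` vanishes there. -/
theorem curve_c_closed_and_singular_at_infinity :
    IsClosed (Hcurve (2 / (3 * Real.sqrt 3)) 0) ∧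
    (![1, Real.sqrt 3] : Fin 2 → ℝ) ∈
      closure {x : Fin 2 → ℝ | ∃ l : ℝ, 0 < l ∧
        ∃ p ∈ Hcurve (2 / (3 * Real.sqrt 3)) 0, x = l • p} ∧
    hLK (2 / (3 * Real.sqrt 3)) 0 ![1, Real.sqrt 3] = 0 ∧
    fderiv ℝ (hLK (2 / (3 * Real.sqrt 3)) 0) ![1, Real.sqrt 3] = 0 := by
  have hs0 : 0 < √3 := by positivity
  have hline (t : ℝ) :
      hLK (2 / (3 * √3)) 0 ![1, t] = 2 / (3 * √3) * (t - √3) ^ 2 * (t + √3 / 2) := by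
    simpa using hLK_c_factorization ![1, t]
  refine ⟨?_, ?_, by simp [hline], by rw [fderiv_hLK, gradHLK_c_one_sqrt_three_eq_zero]⟩
  · rw [Hcurve_c_eq]
    exact (isClosed_singleton.preimage (continuous_hLK _ _)).connectedComponentIn _
  · have hpos : ∀ t ∈ Set.Ico 0 √3, 0 < hLK (2 / (3 * √3)) 0 ![1, t] := fun t ht => by
      rw [hline]
      exact mul_pos (mul_pos (by positivity) (sq_pos_of_ne_zero (sub_ne_zero.2 ht.2.ne)))
        (by linarith [ht.1])
    have hlim : Tendsto (fun t : ℝ => (![1, t] : Fin 2 → ℝ)) (𝓝[<] √3) (𝓝 ![1, √3]) :=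
      ((by fun_prop : Continuous fun t : ℝ => (![1, t] : Fin 2 → ℝ)).tendsto _).mono_left
        nhdsWithin_le_nhds
    refine mem_closure_of_tendsto hlim ?_
    filter_upwards [Ico_mem_nhdsLT hs0] with t ht
    rw [Hcurve_c_eq]
    exact exists_smul_mem_connectedComponentIn_level isPreconnected_Ico ⟨le_rfl, hs0⟩ hpos ht
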